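/- arXiv:hep-th/0611109 — 4 statements merged into one kernel-verified Lean document; each statement's English description precedes it below -/
import Mathlib

section
/- Let V ∈ C^r(ℝ) with r ≥ 1 be such that on an interval [x₊(E₋), x₊(E₊)] the function V is strictly increasing with V' > 0, and let W₊ denote the inverse of V restricted to this interval. Then for λ ∈ (E₋, E₊), the integral T₊(λ) = ∫_{x₊(E₋)}^{x₊(λ)} dx/√(λ − V(x)) satisfies T₊(λ) = 2√(λ − E₋) ∫₀¹ dt / V'(W₊(λ(1−t²) + E₋ t²)), and consequently T₊ is (r−1) times continuously differentiable on (E₋, E₊). -/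
/-!
Substituting `x = W₊(λ(1 - t²) + E₋t²)` gives `λ - V(x) = (λ - E₋)t²` and
`dx = -2(λ - E₋)t dt / V'(x)`, so the factor `t` cancels against `√(λ - V(x)) = √(λ - E₋) t`
and the singular integral becomes `2√(λ - E₋) ∫₀¹ dt / V'(W₊(…))`, with an integrand that is
`C^{r-1}` in `λ` uniformly in `t ∈ [0, 1]`. Differentiating under the integral sign only
multiplies the integrand by the weight `1 - t²`, which gives the regularity by induction.
Since `t = 1` reaches the endpoint `E₋`, this needs `W₊` to be `C^r` on a neighbourhood of
`[E₋, E₊]`: as `V' > 0` on a neighbourhood of `[x₊(E₋), x₊(E₊)]`, `V` is injective there and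
`W₊` extends to a local inverse of `V` around every point of `[E₋, E₊]`.
-/

open Set Filter Topology Metric MeasureTheory

theorem ContDiffAt.of_local_left_inverse {𝕂 : Type*} [RCLike 𝕂] {f g : 𝕂 → 𝕂} {a : 𝕂}
    {n : WithTop ℕ∞} (hf : ContDiffAt 𝕂 n f a) (hf' : deriv f a ≠ 0) (hn : n ≠ 0)
    (hg : ∀ᶠ x in 𝓝 a, g (f x) = x) : ContDiffAt 𝕂 n g (f a) :=
  let hder := (hf.differentiableAt hn).hasDerivAt.hasFDerivAt_equiv hf'
  (hf.to_localInverse hder hn).congr_of_eventuallyEq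
    ((hf.hasStrictFDerivAt' hder hn).localInverse_unique hg)

theorem exists_leftInverse_contDiffAt_of_deriv_pos {n : WithTop ℕ∞} {V : ℝ → ℝ} {s : Set ℝ}
    (hV : ContDiff ℝ n V) (hn : 1 ≤ n) (hs : IsCompact s) (hconv : Convex ℝ s)
    (hV' : ∀ x ∈ s, 0 < deriv V x) :
    ∃ g : ℝ → ℝ, ∀ x ∈ s,
      g (V x) = x ∧ ContDiffAt ℝ n g (V x) ∧ HasDerivAt g (deriv V x)⁻¹ (V x) := by
  have hn0 : n ≠ 0 := (zero_lt_one.trans_le hn).ne'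
  obtain ⟨δ, hδ, hsub⟩ :=
    hs.exists_thickening_subset_open (isOpen_lt continuous_const (hV.continuous_deriv hn)) hV'
  have hinj : InjOn V (thickening δ s) :=
    (strictMonoOn_of_deriv_pos (hconv.thickening δ) hV.continuous.continuousOn
      fun x hx => hsub (interior_subset hx)).injOn
  refine ⟨Function.invFunOn V (thickening δ s), fun x hx => ?_⟩
  have hleft : ∀ᶠ y in 𝓝 x, Function.invFunOn V (thickening δ s) (V y) = y :=
    eventually_of_mem (isOpen_thickening.mem_nhds (self_subset_thickening hδ s hx))
      hinj.leftInvOn_invFunOn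
  exact ⟨hleft.self_of_nhds, hV.contDiffAt.of_local_left_inverse (hV' x hx).ne' hn0 hleft,
    ((hV.contDiffAt.hasStrictDerivAt hn0).to_local_left_inverse (hV' x hx).ne' hleft).hasDerivAt⟩

/-- Unlike the usual substitution rule, this needs no integrability of `f`, so it applies directly
to the singular integrand `(λ - V x)^(-1/2)`. -/
theorem intervalIntegral.integral_comp_abs_deriv_of_strictAntiOn {φ φ' : ℝ → ℝ} {a b : ℝ}
    (hab : a ≤ b) (hφ : ∀ t ∈ Icc a b, HasDerivWithinAt φ (φ' t) (Icc a b) t)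
    (hanti : StrictAntiOn φ (Icc a b)) (f : ℝ → ℝ) :
    ∫ x in φ b..φ a, f x = ∫ t in a..b, |φ' t| * f (φ t) := by
  have himage : φ '' Icc a b = Icc (φ b) (φ a) :=
    ContinuousOn.image_Icc_of_antitoneOn hab (fun t ht => (hφ t ht).continuousWithinAt)
      hanti.antitoneOn
  rw [integral_of_le (hanti.antitoneOn (left_mem_Icc.2 hab) (right_mem_Icc.2 hab) hab),
    integral_of_le hab, ← integral_Icc_eq_integral_Ioc, ← himage, ← integral_Icc_eq_integral_Ioc]
  exact integral_image_eq_integral_abs_deriv_smul measurableSet_Icc hφ hanti.injOn f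

theorem one_sub_sq_mem_Icc {t : ℝ} (ht : t ∈ Icc (0 : ℝ) 1) : 1 - t ^ 2 ∈ Icc (0 : ℝ) 1 :=
  ⟨sub_nonneg.2 (pow_le_one₀ ht.1 ht.2), sub_le_self _ (sq_nonneg t)⟩

theorem mul_add_mul_one_sub_mem_Icc {u v lam w : ℝ} (hlam : lam ∈ Icc u v) (hw : w ∈ Icc 0 1) :
    lam * w + u * (1 - w) ∈ Icc u v := by
  constructor <;> nlinarith [hlam.1, hlam.2, hw.1, hw.2]

theorem mul_one_sub_sq_add_mul_sq_mem_Icc {u v lam t : ℝ} (hlam : lam ∈ Icc u v)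
    (ht : t ∈ Icc (0 : ℝ) 1) : lam * (1 - t ^ 2) + u * t ^ 2 ∈ Icc u v := by
  simpa only [sub_sub_cancel] using mul_add_mul_one_sub_mem_Icc hlam (one_sub_sq_mem_Icc ht)

theorem hasDerivAt_mul_one_sub_sq_add_mul_sq (lam u t : ℝ) :
    HasDerivAt (fun t => lam * (1 - t ^ 2) + u * t ^ 2) (-(2 * (lam - u) * t)) t :=
  ((((hasDerivAt_pow 2 t).const_sub 1).const_mul lam).add
    ((hasDerivAt_pow 2 t).const_mul u)).congr_deriv (by norm_num; ring)

theorem strictAntiOn_mul_one_sub_sq_add_mul_sq {u lam : ℝ} (h : u < lam) :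
    StrictAntiOn (fun t => lam * (1 - t ^ 2) + u * t ^ 2) (Icc 0 1) := by
  refine strictAntiOn_of_deriv_neg (convex_Icc 0 1) (Continuous.continuousOn (by fun_prop))
    fun t ht => ?_
  rw [interior_Icc] at ht
  rw [(hasDerivAt_mul_one_sub_sq_add_mul_sq lam u t).deriv, neg_lt_zero]
  exact mul_pos (mul_pos two_pos (sub_pos.2 h)) ht.1

theorem integral_inv_sqrt_sub_eq {V g : ℝ → ℝ} {u lam : ℝ} (hlam : u < lam)
    (hgV : ∀ y ∈ Icc u lam, V (g y) = y)
    (hg' : ∀ y ∈ Icc u lam, HasDerivAt g (deriv V (g y))⁻¹ y)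
    (hV' : ∀ y ∈ Icc u lam, 0 < deriv V (g y)) :
    ∫ x in g u..g lam, (√(lam - V x))⁻¹
      = 2 * √(lam - u) * ∫ t in (0:ℝ)..1, (deriv V (g (lam * (1 - t ^ 2) + u * t ^ 2)))⁻¹ := by
  set c := lam - u with hc_def
  have hc : 0 < c := sub_pos.2 hlam
  set s : ℝ → ℝ := fun t => lam * (1 - t ^ 2) + u * t ^ 2 with hs_def
  have hs : MapsTo s (Icc 0 1) (Icc u lam) := fun t ht =>
    mul_one_sub_sq_add_mul_sq_mem_Icc (right_mem_Icc.2 hlam.le) ht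
  have hg_mono : StrictMonoOn g (Icc u lam) := by
    refine strictMonoOn_of_deriv_pos (convex_Icc u lam)
      (fun y hy => (hg' y hy).continuousAt.continuousWithinAt) fun y hy => ?_
    rw [interior_Icc] at hy
    rw [(hg' y (Ioo_subset_Icc_self hy)).deriv]
    exact inv_pos.2 (hV' y (Ioo_subset_Icc_self hy))
  have hsubst := intervalIntegral.integral_comp_abs_deriv_of_strictAntiOn zero_le_one
    (fun t ht => ((hg' _ (hs ht)).comp t
      (hasDerivAt_mul_one_sub_sq_add_mul_sq lam u t)).hasDerivWithinAt)
    (hg_mono.comp_strictAntiOn (strictAntiOn_mul_one_sub_sq_add_mul_sq hlam) hs)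
    fun x => (√(lam - V x))⁻¹
  have hs0 : s 0 = lam := by simp [s]
  have hs1 : s 1 = u := by simp [s]
  simp only [Function.comp_apply, hs0, hs1] at hsubst
  rw [hsubst, ← intervalIntegral.integral_const_mul]
  refine intervalIntegral.integral_congr_ae (ae_of_all _ fun t ht => ?_)
  rw [uIoc_of_le zero_le_one] at ht
  have hsqrt : √(lam - V (g (s t))) = √c * t := by
    rw [hgV _ (hs (Ioc_subset_Icc_self ht)),
      show lam - s t = c * t ^ 2 by simp only [hs_def, hc_def]; ring,
      Real.sqrt_mul hc.le, Real.sqrt_sq ht.1.le]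
  have hpos : 0 < deriv V (g (s t)) := hV' _ (hs (Ioc_subset_Icc_self ht))
  have ht0 : t ≠ 0 := ht.1.ne'
  change _ = 2 * √c * (deriv V (g (s t)))⁻¹
  rw [hsqrt, abs_mul, abs_neg, abs_of_pos (inv_pos.2 hpos),
    abs_of_pos (mul_pos (mul_pos two_pos hc) ht.1)]
  field_simp
  exact (Real.sq_sqrt hc.le).symm

section SegmentIntegral

variable {P w F : ℝ → ℝ} {u v : ℝ}

theorem continuousOn_comp_segment (hw : Continuous w) (hw01 : MapsTo w (Icc 0 1) (Icc 0 1))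
    (hF : ContinuousOn F (Icc u v)) {lam : ℝ} (hlam : lam ∈ Icc u v) :
    ContinuousOn (fun t => F (lam * w t + u * (1 - w t))) (Icc 0 1) :=
  hF.comp (by fun_prop) fun _ ht => mul_add_mul_one_sub_mem_Icc hlam (hw01 ht)

theorem continuousOn_integral_comp_segment (hP : Continuous P) (hw : Continuous w)
    (hw01 : MapsTo w (Icc 0 1) (Icc 0 1)) (hF : ContinuousOn F (Icc u v)) :
    ContinuousOn (fun lam => ∫ t in (0:ℝ)..1, P t * F (lam * w t + u * (1 - w t))) (Icc u v) := by
  rcases lt_or_ge v u with huv | huv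
  · simp [Icc_eq_empty_of_lt huv]
  have hext : Continuous (Function.uncurry fun lam t =>
      P t * F (projIcc u v huv (lam * w t + u * (1 - w t)))) :=
    hP.comp continuous_snd |>.mul <| hF.comp_continuous (continuous_subtype_val.comp
      (continuous_projIcc.comp (by fun_prop))) fun _ => Subtype.mem _
  refine (intervalIntegral.continuous_parametric_intervalIntegral_of_continuous' hext 0 1
    |>.continuousOn).congr fun lam hlam => intervalIntegral.integral_congr fun t ht => ?_
  rw [uIcc_of_le zero_le_one] at ht
  simp only [projIcc_of_mem huv (mul_add_mul_one_sub_mem_Icc hlam (hw01 ht))]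

theorem hasDerivAt_integral_comp_segment (hP : Continuous P) (hw : Continuous w)
    (hw01 : MapsTo w (Icc 0 1) (Icc 0 1)) (hF : ∀ y ∈ Icc u v, DifferentiableAt ℝ F y)
    (hF' : ContinuousOn (deriv F) (Icc u v)) {lam : ℝ} (hlam : lam ∈ Ioo u v) :
    HasDerivAt (fun lam => ∫ t in (0:ℝ)..1, P t * F (lam * w t + u * (1 - w t)))
      (∫ t in (0:ℝ)..1, P t * w t * deriv F (lam * w t + u * (1 - w t))) lam := by
  have hFc : ContinuousOn F (Icc u v) := fun y hy => (hF y hy).continuousAt.continuousWithinAt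
  have hint : ∀ {G Q : ℝ → ℝ}, Continuous Q → ContinuousOn G (Icc u v) →
      ∀ x ∈ Icc u v, IntervalIntegrable (fun t => Q t * G (x * w t + u * (1 - w t))) volume 0 1 :=
    fun hQ hG x hx => ContinuousOn.intervalIntegrable <| by
      rw [uIcc_of_le zero_le_one]
      exact hQ.continuousOn.mul (continuousOn_comp_segment hw hw01 hG hx)
  obtain ⟨CP, hCP⟩ :=
    (isCompact_Icc (a := (0:ℝ)) (b := 1)).exists_bound_of_continuousOn (hP.mul hw).continuousOn
  obtain ⟨CF, hCF⟩ := isCompact_Icc.exists_bound_of_continuousOn hF'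
  refine (intervalIntegral.hasDerivAt_integral_of_dominated_loc_of_deriv_le
    (bound := fun _ => CP * CF) (F' := fun x t => P t * w t * deriv F (x * w t + u * (1 - w t)))
    (isOpen_Ioo.mem_nhds hlam) ?_ (hint hP hFc lam (Ioo_subset_Icc_self hlam))
    (hint (Q := fun t => P t * w t) (hP.mul hw) hF' lam
      (Ioo_subset_Icc_self hlam)).def'.aestronglyMeasurable ?_ intervalIntegrable_const ?_).2
  · filter_upwards [isOpen_Ioo.mem_nhds hlam] with x hx
    exact (hint hP hFc x (Ioo_subset_Icc_self hx)).def'.aestronglyMeasurable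
  · refine ae_of_all _ fun t ht x hx => ?_
    rw [uIoc_of_le zero_le_one] at ht
    rw [norm_mul]
    exact mul_le_mul (hCP t (Ioc_subset_Icc_self ht)) (hCF _ (mul_add_mul_one_sub_mem_Icc
        (Ioo_subset_Icc_self hx) (hw01 (Ioc_subset_Icc_self ht))))
      (norm_nonneg _) ((norm_nonneg _).trans (hCP t (Ioc_subset_Icc_self ht)))
  · refine ae_of_all _ fun t ht x hx => ?_
    rw [uIoc_of_le zero_le_one] at ht
    have hmem := mul_add_mul_one_sub_mem_Icc (Ioo_subset_Icc_self hx)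
      (hw01 (Ioc_subset_Icc_self ht))
    have hlin : HasDerivAt (fun x => x * w t + u * (1 - w t)) (w t) x := by
      simpa using ((hasDerivAt_id x).mul_const (w t)).add_const (u * (1 - w t))
    exact (((hF _ hmem).hasDerivAt.comp x hlin).const_mul (P t)).congr_deriv (by ring)

theorem contDiffOn_integral_comp_segment (k : ℕ) (hP : Continuous P) (hw : Continuous w)
    (hw01 : MapsTo w (Icc 0 1) (Icc 0 1)) (hF : ∀ y ∈ Icc u v, ContDiffAt ℝ k F y) :
    ContDiffOn ℝ k (fun lam => ∫ t in (0:ℝ)..1, P t * F (lam * w t + u * (1 - w t)))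
      (Ioo u v) := by
  induction k generalizing P F with
  | zero =>
    exact contDiffOn_zero.2 <| (continuousOn_integral_comp_segment hP hw hw01
      fun y hy => (hF y hy).continuousAt.continuousWithinAt).mono Ioo_subset_Icc_self
  | succ k ih =>
    have hdF : ∀ y ∈ Icc u v, ContDiffAt ℝ k (deriv F) y := fun y hy =>
      (hF y hy).derivWithin (by push_cast; exact le_rfl)
    have hderiv := fun lam (hlam : lam ∈ Ioo u v) => hasDerivAt_integral_comp_segment hP hw hw01
      (fun y hy => (hF y hy).differentiableAt (by simp))
      (fun y hy => (hdF y hy).continuousAt.continuousWithinAt) hlam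
    rw [Nat.cast_succ, contDiffOn_succ_iff_deriv_of_isOpen isOpen_Ioo]
    exact ⟨fun lam hlam => (hderiv lam hlam).differentiableAt.differentiableWithinAt, by simp,
      (ih (hP.mul hw) hdF).congr fun lam hlam => (hderiv lam hlam).deriv⟩

end SegmentIntegral

theorem contDiffOn_two_mul_sqrt_sub_mul_integral {G : ℝ → ℝ} {u v : ℝ} (k : ℕ)
    (hG : ∀ y ∈ Icc u v, ContDiffAt ℝ k G y) :
    ContDiffOn ℝ k
      (fun lam => 2 * √(lam - u) * ∫ t in (0:ℝ)..1, G (lam * (1 - t ^ 2) + u * t ^ 2))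
      (Ioo u v) := by
  have hI := contDiffOn_integral_comp_segment (P := fun _ => 1) k continuous_const
    (by fun_prop) (fun _ => one_sub_sq_mem_Icc) hG
  simp only [one_mul, sub_sub_cancel] at hI
  have hsqrt : ContDiffOn ℝ k (fun lam => 2 * √(lam - u)) (Ioo u v) := fun lam hlam =>
    (contDiffAt_const.mul ((contDiffAt_id.sub contDiffAt_const).sqrt
      (sub_pos.2 hlam.1).ne')).contDiffWithinAt
  exact hsqrt.mul hI

theorem stmt8_general (r : ℕ) (hr : 1 ≤ r) (V W : ℝ → ℝ) (a b Em Ep : ℝ)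
    (hab : a < b) (hV : ContDiff ℝ r V)
    (hV' : ∀ x ∈ Set.Icc a b, 0 < deriv V x)
    (hVa : V a = Em)
    (hW2 : ∀ lam ∈ Set.Icc Em Ep, W lam ∈ Set.Icc a b ∧ V (W lam) = lam) :
    (∀ lam ∈ Set.Ioo Em Ep,
      (∫ x in a..(W lam), (Real.sqrt (lam - V x))⁻¹)
        = 2 * Real.sqrt (lam - Em)
          * ∫ t in (0:ℝ)..1, (deriv V (W (lam * (1 - t^2) + Em * t^2)))⁻¹) ∧
    ContDiffOn ℝ (r - 1 : ℕ) (fun lam => ∫ x in a..(W lam), (Real.sqrt (lam - V x))⁻¹)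
      (Set.Ioo Em Ep) := by
  obtain ⟨g, hg⟩ := exists_leftInverse_contDiffAt_of_deriv_pos hV (by exact_mod_cast hr)
    isCompact_Icc (convex_Icc a b) hV'
  have hgW : ∀ y ∈ Icc Em Ep, g y = W y := fun y hy => by
    conv_lhs => rw [← (hW2 y hy).2]
    exact (hg _ (hW2 y hy).1).1
  have hgV : ∀ y ∈ Icc Em Ep, V (g y) = y := fun y hy => hgW y hy ▸ (hW2 y hy).2
  have hpos : ∀ y ∈ Icc Em Ep, 0 < deriv V (g y) := fun y hy => hgW y hy ▸ hV' _ (hW2 y hy).1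
  have hg' : ∀ y ∈ Icc Em Ep, ContDiffAt ℝ r g y ∧ HasDerivAt g (deriv V (g y))⁻¹ y :=
    fun y hy => by
      have := (hg _ (hW2 y hy).1).2
      rwa [(hW2 y hy).2, ← hgW y hy] at this
  have hga : g Em = a := hVa ▸ (hg a (left_mem_Icc.2 hab.le)).1
  have hT : ∀ lam ∈ Ioo Em Ep, (∫ x in a..(W lam), (√(lam - V x))⁻¹)
      = 2 * √(lam - Em) * ∫ t in (0:ℝ)..1, (deriv V (g (lam * (1 - t ^ 2) + Em * t ^ 2)))⁻¹ := by
    intro lam hlam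
    have hsub : Icc Em lam ⊆ Icc Em Ep := Icc_subset_Icc_right hlam.2.le
    rw [← hgW lam (Ioo_subset_Icc_self hlam), ← hga]
    exact integral_inv_sqrt_sub_eq hlam.1 (fun y hy => hgV y (hsub hy))
      (fun y hy => (hg' y (hsub hy)).2) (fun y hy => hpos y (hsub hy))
  refine ⟨fun lam hlam => (hT lam hlam).trans ?_, ?_⟩
  · congr 1
    refine intervalIntegral.integral_congr fun t ht => ?_
    rw [uIcc_of_le zero_le_one] at ht
    simp only [hgW _ (mul_one_sub_sq_add_mul_sq_mem_Icc (Ioo_subset_Icc_self hlam) ht)]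
  have hdV : ContDiff ℝ (r - 1 : ℕ) (deriv V) :=
    ContDiff.deriv' (by rwa [← Nat.cast_add_one, Nat.sub_add_cancel hr])
  have hG : ∀ y ∈ Icc Em Ep, ContDiffAt ℝ (r - 1 : ℕ) (fun y => (deriv V (g y))⁻¹) y :=
    fun y hy => (hdV.contDiffAt.comp y ((hg' y hy).1.of_le (by exact_mod_cast r.sub_le 1))).inv
      (hpos y hy).ne'
  exact (contDiffOn_two_mul_sqrt_sub_mul_integral (r - 1) hG).congr hT

/-- Regularity of the period integral near the right turning point: with `V ∈ C^r`,
`V' > 0` on `[a,b] = [x₊(E₋), x₊(E₊)]`, `V(a) = E₋`, `V(b) = E₊` and `W₊` the inverse of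
`V` on this interval, for `λ ∈ (E₋,E₊)` one has
`T₊(λ) = ∫_a^{W₊(λ)} dx/√(λ−V(x)) = 2√(λ−E₋) ∫₀¹ dt / V'(W₊(λ(1−t²)+E₋t²))`,
and `T₊` is `C^{r−1}` on `(E₋,E₊)`. -/
theorem stmt8 (r : ℕ) (hr : 1 ≤ r) (V W : ℝ → ℝ) (a b Em Ep : ℝ)
    (hab : a < b) (hV : ContDiff ℝ r V)
    (hV' : ∀ x ∈ Set.Icc a b, 0 < deriv V x)
    (hVa : V a = Em) (hVb : V b = Ep)
    (hW : ∀ x ∈ Set.Icc a b, W (V x) = x)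
    (hW2 : ∀ lam ∈ Set.Icc Em Ep, W lam ∈ Set.Icc a b ∧ V (W lam) = lam) :
    (∀ lam ∈ Set.Ioo Em Ep,
      (∫ x in a..(W lam), (Real.sqrt (lam - V x))⁻¹)
        = 2 * Real.sqrt (lam - Em)
          * ∫ t in (0:ℝ)..1, (deriv V (W (lam * (1 - t^2) + Em * t^2)))⁻¹) ∧
    ContDiffOn ℝ (r - 1 : ℕ) (fun lam => ∫ x in a..(W lam), (Real.sqrt (lam - V x))⁻¹)
      (Set.Ioo Em Ep) :=
  stmt8_general r hr V W a b Em Ep hab hV hV' hVa hW2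
end

section
/- Let V ∈ C²(ℝ) satisfy: V(x) − E has exactly two simple zeros x₋ < x₊ (V'(x₋) < 0 < V'(x₊)) and (V(x)−E)/((x−x₋)(x−x₊)) is positive on ℝ. Then the phase-space volume function J(λ) = 2∫_{x₋(λ)}^{x₊(λ)} √(λ − V(x)) dx, defined for λ in a sufficiently small neighborhood of E (with x₋(λ), x₊(λ) the turning points at energy λ), is differentiable at λ ∈ (E₋,E₊) with J'(λ) = ∫_{x₋(λ)}^{x₊(λ)} dx/√(λ − V(x)). -/
/-!
Lean's `√` vanishes on negative reals, so for `λ` near `E` the action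
`2 ∫_{x₋(λ)}^{x₊(λ)} √(λ - V)` equals `2 ∫_A^B √(λ - V)` over a fixed interval `[A, B]` around
the well: only the integrand depends on `λ`. Its difference quotients in `λ` are dominated by
`1 / √|λ - V x|`, which is integrable because `V' ≠ 0` near the turning points forces
`|V x - λ| ≥ c |x - x±(λ)|` there, so dominated convergence differentiates under the integral.
The turning points are the inverses of `V` on the two intervals where it is strictly monotone.
-/

open Real MeasureTheory Set Filter Topology Function

theorem abs_sqrt_sub_sqrt_le {a b : ℝ} (ha : a ≠ 0) : |√b - √a| ≤ |b - a| / √|a| := by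
  rw [le_div_iff₀ (sqrt_pos.2 (abs_pos.2 ha))]
  rcases ha.lt_or_gt with ha | ha
  · -- AM-GM: `2 √b √(-a) ≤ b - a`
    rw [sqrt_eq_zero'.2 ha.le, sub_zero, abs_of_neg ha]
    rcases le_or_gt b 0 with hb | hb
    · simp [sqrt_eq_zero'.2 hb]
    · rw [abs_of_nonneg (sqrt_nonneg b), abs_of_pos (by linarith)]
      nlinarith [sq_nonneg (√b - √(-a)), sq_sqrt hb.le, sq_sqrt (neg_nonneg.2 ha.le)]
  · rw [abs_of_pos ha]
    rcases le_or_gt 0 b with hb | hb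
    · calc |√b - √a| * √a ≤ |√b - √a| * (√b + √a) := by
            gcongr; exact le_add_of_nonneg_left (sqrt_nonneg b)
        _ = |b - a| := by
          rw [← abs_of_nonneg (by positivity : 0 ≤ √b + √a), ← abs_mul]
          congr 1; linear_combination sq_sqrt hb - sq_sqrt ha.le
    · rw [sqrt_eq_zero'.2 hb.le, zero_sub, abs_neg, abs_of_nonneg (sqrt_nonneg a),
        abs_of_neg (by linarith), mul_self_sqrt ha.le]
      linarith

theorem hasDerivAt_two_mul_sqrt_sub {v lam : ℝ} (h : v ≠ lam) :
    HasDerivAt (fun m ↦ 2 * √(m - v)) (√(lam - v))⁻¹ lam := by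
  rcases h.lt_or_gt with h | h
  · exact ((((hasDerivAt_id' lam).sub_const v).sqrt (sub_pos.2 h).ne').const_mul 2).congr_deriv
      (by field_simp)
  · rw [sqrt_eq_zero'.2 (sub_nonpos.2 h.le), inv_zero]
    refine (hasDerivAt_const lam 0).congr_of_eventuallyEq ?_
    filter_upwards [eventually_lt_nhds h] with m hm
    simp [sqrt_eq_zero'.2 (sub_nonpos.2 hm.le)]

theorem hasDerivAt_integral_of_dominated_loc_of_lip' {α E : Type*} [MeasurableSpace α]
    {μ : Measure α} [NormedAddCommGroup E] [NormedSpace ℝ E] [CompleteSpace E]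
    {F : ℝ → α → E} {F' : α → E} {x₀ : ℝ} {bound : α → ℝ} {s : Set ℝ} (hs : s ∈ 𝓝 x₀)
    (hF_meas : ∀ x ∈ s, AEStronglyMeasurable (F x) μ) (hF_int : Integrable (F x₀) μ)
    (hF'_meas : AEStronglyMeasurable F' μ)
    (h_lipsch : ∀ᵐ a ∂μ, ∀ x ∈ s, ‖F x a - F x₀ a‖ ≤ bound a * |x - x₀|)
    (bound_integrable : Integrable bound μ) (h_diff : ∀ᵐ a ∂μ, HasDerivAt (F · a) (F' a) x₀) :
    HasDerivAt (fun x ↦ ∫ a, F x a ∂μ) (∫ a, F' a ∂μ) x₀ := by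
  set L : E →L[ℝ] ℝ →L[ℝ] E := ContinuousLinearMap.smulRightL ℝ ℝ E 1
  obtain ⟨hF'_int, key⟩ := hasFDerivAt_integral_of_dominated_loc_of_lip' hs hF_meas hF_int
    (L.continuous.comp_aestronglyMeasurable hF'_meas) h_lipsch bound_integrable
    (h_diff.mono fun _ h ↦ h.hasFDerivAt)
  replace hF'_int : Integrable F' μ := by
    rw [← integrable_norm_iff (L.continuous.comp_aestronglyMeasurable hF'_meas)] at hF'_int
    simpa [L, comp_def, integrable_norm_iff hF'_meas] using hF'_int
  rw [ContinuousLinearMap.integral_comp_comm _ hF'_int] at key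
  simpa [L] using key.hasDerivAt

theorem hasDerivAt_integral_two_mul_sqrt_sub {α : Type*} [MeasurableSpace α] {μ : Measure α}
    {V : α → ℝ} {lam : ℝ} (hV : AEMeasurable V μ) (hint : Integrable (fun x ↦ √(lam - V x)) μ)
    (hbound : Integrable (fun x ↦ (√|lam - V x|)⁻¹) μ) (hne : ∀ᵐ x ∂μ, V x ≠ lam) :
    HasDerivAt (fun m ↦ ∫ x, 2 * √(m - V x) ∂μ) (∫ x, (√(lam - V x))⁻¹ ∂μ) lam := by
  refine hasDerivAt_integral_of_dominated_loc_of_lip' (bound := fun x ↦ 2 * (√|lam - V x|)⁻¹)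
    univ_mem (fun m _ ↦ ((hV.const_sub m).sqrt.const_mul 2).aestronglyMeasurable)
    (hint.const_mul 2) (hV.const_sub lam).sqrt.inv.aestronglyMeasurable ?_ (hbound.const_mul 2)
    (hne.mono fun x hx ↦ hasDerivAt_two_mul_sqrt_sub hx)
  filter_upwards [hne] with x hx m _
  have := abs_sqrt_sub_sqrt_le (b := m - V x) (sub_ne_zero.2 hx.symm)
  rw [sub_sub_sub_cancel_right] at this
  rw [Real.norm_eq_abs, ← mul_sub, abs_mul, abs_two, mul_assoc, ← div_eq_inv_mul]
  gcongr

theorem intervalIntegrable_inv_sqrt_abs (p q : ℝ) :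
    IntervalIntegrable (fun x ↦ (√|x|)⁻¹) volume p q := by
  have hpos : ∀ c, 0 ≤ c → IntervalIntegrable (fun x ↦ (√|x|)⁻¹) volume 0 c := by
    intro c hc
    refine (intervalIntegral.intervalIntegrable_rpow' (r := -(1 / 2)) (by norm_num)).congr ?_
    rw [uIoc_of_le hc]
    intro x hx
    simp only [abs_of_pos hx.1, sqrt_eq_rpow, ← rpow_neg hx.1.le]
  have h : ∀ c, IntervalIntegrable (fun x ↦ (√|x|)⁻¹) volume 0 c := by
    intro c
    rcases le_total 0 c with hc | hc
    · exact hpos c hc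
    · rw [IntervalIntegrable.iff_comp_neg]
      simpa using hpos (-c) (neg_nonneg.2 hc)
  exact (h p).symm.trans (h q)

theorem intervalIntegrable_inv_sqrt_abs_of_mul_abs_sub_le {f : ℝ → ℝ} {a c p q : ℝ}
    (hf : Continuous f) (hc : 0 < c) (h : ∀ x ∈ uIcc p q, c * |x - a| ≤ |f x|) :
    IntervalIntegrable (fun x ↦ (√|f x|)⁻¹) volume p q := by
  have hdom : IntervalIntegrable (fun x ↦ (√c)⁻¹ * (√|x - a|)⁻¹) volume p q := by
    simpa using
      ((intervalIntegrable_inv_sqrt_abs (p - a) (q - a)).comp_sub_right a).const_mul (√c)⁻¹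
  refine hdom.mono_fun' hf.abs.sqrt.measurable.inv.aestronglyMeasurable ?_
  filter_upwards [ae_restrict_mem measurableSet_uIoc,
    ((countable_singleton a).ae_notMem volume).filter_mono ae_restrict_le] with x hx hxa
  have hpos : 0 < c * |x - a| := mul_pos hc (abs_pos.2 (sub_ne_zero.2 hxa))
  calc ‖(√|f x|)⁻¹‖ = (√|f x|)⁻¹ := norm_of_nonneg (inv_nonneg.2 (sqrt_nonneg _))
    _ ≤ (√(c * |x - a|))⁻¹ :=
      inv_anti₀ (sqrt_pos.2 hpos) (sqrt_le_sqrt (h x (uIoc_subset_uIcc hx)))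
    _ = (√c)⁻¹ * (√|x - a|)⁻¹ := by rw [sqrt_mul hc.le, mul_inv]

theorem mul_abs_sub_le_abs_sub_of_le_abs_deriv {f : ℝ → ℝ} {s : Set ℝ} {c : ℝ}
    (hf : Differentiable ℝ f) (hs : s.OrdConnected) (h : ∀ t ∈ s, c ≤ |deriv f t|) {x y : ℝ}
    (hx : x ∈ s) (hy : y ∈ s) : c * |x - y| ≤ |f x - f y| := by
  wlog hxy : x < y generalizing x y
  · rcases (not_lt.1 hxy).eq_or_lt with rfl | hyx
    · simp
    · simpa only [abs_sub_comm] using this hy hx hyx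
  obtain ⟨ξ, hξ, hslope⟩ := exists_deriv_eq_slope f hxy hf.continuous.continuousOn
    hf.differentiableOn
  have hξs : ξ ∈ s := hs.out hx hy (Ioo_subset_Icc_self hξ)
  rw [eq_div_iff (sub_pos.2 hxy).ne'] at hslope
  rw [abs_sub_comm x, abs_sub_comm (f x), ← hslope, abs_mul]
  exact mul_le_mul_of_nonneg_right (h ξ hξs) (abs_nonneg _)

theorem exists_continuousOn_invOn_of_strictMonoOn {f : ℝ → ℝ} {p q : ℝ} (hpq : p ≤ q)
    (hf : ContinuousOn f (Icc p q)) (hmono : StrictMonoOn f (Icc p q)) :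
    ∃ g : ℝ → ℝ, ContinuousOn g (Ioo (f p) (f q)) ∧ MapsTo g (Ioo (f p) (f q)) (Ioo p q) ∧
      InvOn g f (Ioo p q) (Ioo (f p) (f q)) := by
  set g := invFunOn f (Icc p q)
  have hg : ∀ y ∈ Ioo (f p) (f q), g y ∈ Icc p q ∧ f (g y) = y := fun y hy ↦
    have hy' : ∃ x ∈ Icc p q, f x = y := intermediate_value_Icc hpq hf (Ioo_subset_Icc_self hy)
    ⟨invFunOn_mem hy', invFunOn_eq hy'⟩
  have hmaps : MapsTo g (Ioo (f p) (f q)) (Ioo p q) := by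
    intro y hy
    obtain ⟨⟨hpg, hgq⟩, hfg⟩ := hg y hy
    refine ⟨hpg.lt_of_ne ?_, hgq.lt_of_ne ?_⟩ <;> rintro h
    · exact hy.1.ne (by rw [← hfg, ← h])
    · exact hy.2.ne (by rw [← hfg, h])
  have hleft : LeftInvOn g f (Ioo p q) := hmono.injOn.leftInvOn_invFunOn.mono Ioo_subset_Icc_self
  have hgmono : MonotoneOn g (Ioo (f p) (f q)) := fun y hy y' hy' hyy' ↦ by
    rwa [← hmono.le_iff_le (hg y hy).1 (hg y' hy').1, (hg y hy).2, (hg y' hy').2]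
  refine ⟨g, fun y hy ↦ ?_, hmaps, hleft, fun y hy ↦ (hg y hy).2⟩
  refine (continuousAt_of_monotoneOn_of_image_mem_nhds hgmono (isOpen_Ioo.mem_nhds hy)
    (mem_of_superset (isOpen_Ioo.mem_nhds (hmaps hy)) fun x hx ↦ ?_)).continuousWithinAt
  exact ⟨f x, ⟨hmono ⟨le_rfl, hpq⟩ (Ioo_subset_Icc_self hx) hx.1,
    hmono (Ioo_subset_Icc_self hx) ⟨hpq, le_rfl⟩ hx.2⟩, hleft hx⟩

theorem exists_continuousOn_invOn_of_strictAntiOn {f : ℝ → ℝ} {p q : ℝ} (hpq : p ≤ q)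
    (hf : ContinuousOn f (Icc p q)) (hanti : StrictAntiOn f (Icc p q)) :
    ∃ g : ℝ → ℝ, ContinuousOn g (Ioo (f q) (f p)) ∧ MapsTo g (Ioo (f q) (f p)) (Ioo p q) ∧
      InvOn g f (Ioo p q) (Ioo (f q) (f p)) := by
  obtain ⟨g, hcont, hmaps, hleft, hright⟩ :=
    exists_continuousOn_invOn_of_strictMonoOn hpq hf.neg hanti.neg
  have hneg : MapsTo (fun y ↦ -y) (Ioo (f q) (f p)) (Ioo (-f p) (-f q)) :=
    fun y hy ↦ ⟨neg_lt_neg hy.2, neg_lt_neg hy.1⟩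
  refine ⟨fun y ↦ g (-y), hcont.comp continuousOn_neg hneg, hmaps.comp hneg,
    fun x hx ↦ hleft hx, fun y hy ↦ ?_⟩
  simpa using hright (hneg hy)

section PotentialWell

variable {V : ℝ → ℝ} {A P Q B c : ℝ}

theorem strictAntiOn_Icc_of_deriv_le_neg (hV : Continuous V) (hc : 0 < c)
    (hL : ∀ t ∈ Icc A P, deriv V t ≤ -c) : StrictAntiOn V (Icc A P) :=
  strictAntiOn_of_deriv_neg (convex_Icc A P) hV.continuousOn fun t ht ↦
    (hL t (interior_subset ht)).trans_lt (neg_neg_of_pos hc)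

theorem strictMonoOn_Icc_of_le_deriv (hV : Continuous V) (hc : 0 < c)
    (hR : ∀ t ∈ Icc Q B, c ≤ deriv V t) : StrictMonoOn V (Icc Q B) :=
  strictMonoOn_of_deriv_pos (convex_Icc Q B) hV.continuousOn fun t ht ↦
    hc.trans_le (hR t (interior_subset ht))

theorem intervalIntegral_eq_of_turningPoints {g : ℝ → ℝ} {m a b : ℝ}
    (hanti : AntitoneOn V (Icc A P)) (hmono : MonotoneOn V (Icc Q B)) (hPQ : P ≤ Q)
    (ha : a ∈ Icc A P) (hVa : V a = m) (hb : b ∈ Icc Q B) (hVb : V b = m)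
    (hg : ∀ x, m ≤ V x → g x = 0) :
    ∫ x in a..b, g x = ∫ x in A..B, g x := by
  have hab : a ≤ b := ha.2.trans (hPQ.trans hb.1)
  rw [intervalIntegral.integral_of_le hab,
    intervalIntegral.integral_of_le (ha.1.trans (hab.trans hb.2))]
  refine (setIntegral_eq_of_subset_of_forall_sdiff_eq_zero measurableSet_Ioc
    (Ioc_subset_Ioc ha.1 hb.2) fun x ⟨⟨hAx, hxB⟩, hx⟩ ↦ hg x ?_).symm
  rcases (not_and_or.1 hx).imp not_lt.1 not_le.1 with hxa | hbx
  · exact hVa ▸ hanti ⟨hAx.le, hxa.trans ha.2⟩ ha hxa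
  · exact hVb ▸ hmono hb ⟨hb.1.trans hbx.le, hxB⟩ hbx.le

theorem hasDerivAt_intervalIntegral_two_mul_sqrt_sub {lam a b : ℝ}
    (hV : Differentiable ℝ V) (hc : 0 < c) (hL : ∀ t ∈ Icc A P, deriv V t ≤ -c)
    (hR : ∀ t ∈ Icc Q B, c ≤ deriv V t) (hM : ∀ x ∈ Icc P Q, V x < lam) (hPQ : P ≤ Q)
    (ha : a ∈ Icc A P) (hVa : V a = lam) (hb : b ∈ Icc Q B) (hVb : V b = lam) :
    HasDerivAt (fun m ↦ ∫ x in A..B, 2 * √(m - V x)) (∫ x in A..B, (√(lam - V x))⁻¹) lam := by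
  have hAB : A ≤ B := ha.1.trans (ha.2.trans (hPQ.trans (hb.1.trans hb.2)))
  have hleft : ∀ x ∈ Icc A P, c * |x - a| ≤ |lam - V x| := fun x hx ↦ by
    simpa [hVa, abs_sub_comm] using mul_abs_sub_le_abs_sub_of_le_abs_deriv hV ordConnected_Icc
      (fun t ht ↦ (le_neg.1 (hL t ht)).trans (neg_le_abs _)) hx ha
  have hright : ∀ x ∈ Icc Q B, c * |x - b| ≤ |lam - V x| := fun x hx ↦ by
    simpa [hVb, abs_sub_comm] using mul_abs_sub_le_abs_sub_of_le_abs_deriv hV ordConnected_Icc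
      (fun t ht ↦ (hR t ht).trans (le_abs_self _)) hx hb
  have hbound : IntervalIntegrable (fun x ↦ (√|lam - V x|)⁻¹) volume A B := by
    have hcont : Continuous fun x ↦ lam - V x := continuous_const.sub hV.continuous
    have hmid : IntervalIntegrable (fun x ↦ (√|lam - V x|)⁻¹) volume P Q := by
      refine ContinuousOn.intervalIntegrable (hcont.abs.sqrt.continuousOn.inv₀ fun x hx ↦ ?_)
      rw [uIcc_of_le hPQ] at hx
      exact (sqrt_pos.2 (abs_pos.2 (sub_ne_zero.2 (hM x hx).ne'))).ne'
    refine ((intervalIntegrable_inv_sqrt_abs_of_mul_abs_sub_le (a := a) hcont hc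
      fun x hx ↦ ?_).trans hmid).trans
      (intervalIntegrable_inv_sqrt_abs_of_mul_abs_sub_le (a := b) hcont hc fun x hx ↦ ?_)
    · exact hleft x (by rwa [uIcc_of_le (ha.1.trans ha.2)] at hx)
    · exact hright x (by rwa [uIcc_of_le (hb.1.trans hb.2)] at hx)
  have hne : ∀ᵐ x ∂volume.restrict (Ioc A B), V x ≠ lam := by
    filter_upwards [ae_restrict_mem measurableSet_Ioc,
      ((toFinite {a, b}).countable.ae_notMem volume).filter_mono ae_restrict_le] with x hx hxab hVx
    simp only [mem_insert_iff, mem_singleton_iff, not_or] at hxab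
    rcases le_or_gt x P with hxP | hPx
    · exact hxab.1 (sub_eq_zero.1 (abs_nonpos_iff.1
        (nonpos_of_mul_nonpos_right (by simpa [hVx] using hleft x ⟨hx.1.le, hxP⟩) hc)))
    rcases le_or_gt x Q with hxQ | hQx
    · exact (hM x ⟨hPx.le, hxQ⟩).ne hVx
    · exact hxab.2 (sub_eq_zero.1 (abs_nonpos_iff.1
        (nonpos_of_mul_nonpos_right (by simpa [hVx] using hright x ⟨hQx.le, hx.2⟩) hc)))
  simp only [intervalIntegral.integral_of_le hAB]
  exact hasDerivAt_integral_two_mul_sqrt_sub hV.continuous.measurable.aemeasurable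
    ((continuous_const.sub hV.continuous).sqrt.integrableOn_Icc.mono_set Ioc_subset_Icc_self)
    hbound.1 hne

theorem hasDerivAt_two_mul_integral_sqrt_sub_turningPoints {xl xr : ℝ → ℝ} {lam : ℝ}
    (hV : Differentiable ℝ V) (hc : 0 < c) (hL : ∀ t ∈ Icc A P, deriv V t ≤ -c)
    (hR : ∀ t ∈ Icc Q B, c ≤ deriv V t) (hM : ∀ x ∈ Icc P Q, V x < lam) (hPQ : P ≤ Q)
    (hturn : ∀ᶠ m in 𝓝 lam, xl m ∈ Icc A P ∧ V (xl m) = m ∧ xr m ∈ Icc Q B ∧ V (xr m) = m) :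
    HasDerivAt (fun m ↦ 2 * ∫ x in xl m..xr m, √(m - V x))
      (∫ x in xl lam..xr lam, (√(lam - V x))⁻¹) lam := by
  have hanti := (strictAntiOn_Icc_of_deriv_le_neg hV.continuous hc hL).antitoneOn
  have hmono := (strictMonoOn_Icc_of_le_deriv hV.continuous hc hR).monotoneOn
  obtain ⟨ha, hVa, hb, hVb⟩ := hturn.self_of_nhds
  rw [intervalIntegral_eq_of_turningPoints hanti hmono hPQ ha hVa hb hVb fun x hx ↦ by
    rw [sqrt_eq_zero'.2 (sub_nonpos.2 hx), inv_zero]]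
  refine (hasDerivAt_intervalIntegral_two_mul_sqrt_sub hV hc hL hR hM hPQ ha hVa hb
    hVb).congr_of_eventuallyEq ?_
  filter_upwards [hturn] with m ⟨ha, hVa, hb, hVb⟩
  rw [← intervalIntegral.integral_const_mul, intervalIntegral_eq_of_turningPoints hanti hmono hPQ
    ha hVa hb hVb fun x hx ↦ by rw [sqrt_eq_zero'.2 (sub_nonpos.2 hx), mul_zero]]

theorem exists_turningPoints_hasDerivAt_action {M : ℝ} (hV : Differentiable ℝ V) (hc : 0 < c)
    (hL : ∀ t ∈ Icc A P, deriv V t ≤ -c) (hR : ∀ t ∈ Icc Q B, c ≤ deriv V t) (hAP : A < P)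
    (hPQ : P ≤ Q) (hQB : Q < B) (hM : ∀ x ∈ Icc P Q, V x ≤ M) :
    ∃ xl xr : ℝ → ℝ, ContinuousOn xl (Ioo M (min (V A) (V B))) ∧
      ContinuousOn xr (Ioo M (min (V A) (V B))) ∧ LeftInvOn xl V (Ioo A P) ∧
      LeftInvOn xr V (Ioo Q B) ∧
      (∀ lam ∈ Ioo M (min (V A) (V B)), V (xl lam) = lam ∧ V (xr lam) = lam ∧ xl lam < xr lam) ∧
      ∀ lam ∈ Ioo M (min (V A) (V B)),
        HasDerivAt (fun m ↦ 2 * ∫ x in xl m..xr m, √(m - V x))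
          (∫ x in xl lam..xr lam, (√(lam - V x))⁻¹) lam := by
  obtain ⟨xl, hxl, hxl_maps, hxl_left, hxl_right⟩ := exists_continuousOn_invOn_of_strictAntiOn
    hAP.le hV.continuous.continuousOn (strictAntiOn_Icc_of_deriv_le_neg hV.continuous hc hL)
  obtain ⟨xr, hxr, hxr_maps, hxr_left, hxr_right⟩ := exists_continuousOn_invOn_of_strictMonoOn
    hQB.le hV.continuous.continuousOn (strictMonoOn_Icc_of_le_deriv hV.continuous hc hR)
  have hUl : Ioo M (min (V A) (V B)) ⊆ Ioo (V P) (V A) := fun lam hlam ↦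
    ⟨(hM P ⟨le_rfl, hPQ⟩).trans_lt hlam.1, hlam.2.trans_le (min_le_left _ _)⟩
  have hUr : Ioo M (min (V A) (V B)) ⊆ Ioo (V Q) (V B) := fun lam hlam ↦
    ⟨(hM Q ⟨hPQ, le_rfl⟩).trans_lt hlam.1, hlam.2.trans_le (min_le_right _ _)⟩
  refine ⟨xl, xr, hxl.mono hUl, hxr.mono hUr, hxl_left, hxr_left, fun lam hlam ↦
    ⟨hxl_right (hUl hlam), hxr_right (hUr hlam),
      ((hxl_maps (hUl hlam)).2.trans_le hPQ).trans (hxr_maps (hUr hlam)).1⟩, fun lam hlam ↦ ?_⟩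
  refine hasDerivAt_two_mul_integral_sqrt_sub_turningPoints hV hc hL hR
    (fun x hx ↦ (hM x hx).trans_lt hlam.1) hPQ ?_
  filter_upwards [isOpen_Ioo.mem_nhds hlam] with m hm
  exact ⟨Ioo_subset_Icc_self (hxl_maps (hUl hm)), hxl_right (hUl hm),
    Ioo_subset_Icc_self (hxr_maps (hUr hm)), hxr_right (hUr hm)⟩

end PotentialWell

theorem exists_deriv_bounds_on_Icc_of_continuous_deriv {V : ℝ → ℝ} {xm xp : ℝ}
    (hV' : Continuous (deriv V)) (hxx : xm < xp) (hV'm : deriv V xm < 0)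
    (hV'p : 0 < deriv V xp) :
    ∃ δ > 0, ∃ c > 0, xm + δ ≤ xp - δ ∧ (∀ t ∈ Icc (xm - δ) (xm + δ), deriv V t ≤ -c) ∧
      ∀ t ∈ Icc (xp - δ) (xp + δ), c ≤ deriv V t := by
  obtain ⟨c, hc, hcm, hcp⟩ : ∃ c > 0, deriv V xm < -c ∧ c < deriv V xp :=
    ⟨min (-deriv V xm) (deriv V xp) / 2, half_pos (lt_min (neg_pos.2 hV'm) hV'p),
      by linarith [min_le_left (-deriv V xm) (deriv V xp)],
      by linarith [min_le_right (-deriv V xm) (deriv V xp)]⟩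
  have hsmall : ∀ᶠ δ in 𝓝 0, Metric.closedBall xm δ ⊆ {t | deriv V t ≤ -c} ∧
      Metric.closedBall xp δ ⊆ {t | c ≤ deriv V t} ∧ δ ≤ (xp - xm) / 2 :=
    (eventually_closedBall_subset ((hV'.tendsto xm).eventually (eventually_le_nhds hcm))).and
      ((eventually_closedBall_subset ((hV'.tendsto xp).eventually (eventually_ge_nhds hcp))).and
        (eventually_le_nhds (half_pos (sub_pos.2 hxx))))
  obtain ⟨δ, ⟨hδm, hδp, hδ⟩, hδpos⟩ :=
    ((hsmall.filter_mono nhdsWithin_le_nhds).and (self_mem_nhdsWithin (s := Ioi 0))).exists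
  refine ⟨δ, hδpos, c, hc, by linarith, fun t ht ↦ hδm ?_, fun t ht ↦ hδp ?_⟩ <;>
    rwa [Real.closedBall_eq_Icc]

/-- Differentiability of the action integral: under the two-turning-point assumptions on
`V` at energy `E`, for `λ` in a neighborhood of `E` the turning points `x₋(λ) < x₊(λ)`
exist (continuously in `λ`, with `x₋(E) = x₋`, `x₊(E) = x₊`) and
`J(λ) = 2∫_{x₋(λ)}^{x₊(λ)} √(λ−V) dx` has derivative `J'(λ) = ∫_{x₋(λ)}^{x₊(λ)} dx/√(λ−V)`. -/
theorem stmt11 (V : ℝ → ℝ) (E xm xp : ℝ) (hxx : xm < xp)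
    (hV : ContDiff ℝ 2 V) (hVm : V xm = E) (hVp : V xp = E)
    (hV'm : deriv V xm < 0) (hV'p : 0 < deriv V xp)
    (hpos : ∀ x, x ≠ xm → x ≠ xp → 0 < (V x - E) / ((x - xm) * (x - xp))) :
    ∃ Em Ep : ℝ, ∃ xmf xpf : ℝ → ℝ, Em < E ∧ E < Ep ∧
      ContinuousOn xmf (Set.Ioo Em Ep) ∧ ContinuousOn xpf (Set.Ioo Em Ep) ∧
      xmf E = xm ∧ xpf E = xp ∧
      (∀ lam ∈ Set.Ioo Em Ep, V (xmf lam) = lam ∧ V (xpf lam) = lam ∧ xmf lam < xpf lam) ∧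
      ∀ lam ∈ Set.Ioo Em Ep,
        HasDerivAt (fun mu => 2 * ∫ x in xmf mu..xpf mu, Real.sqrt (mu - V x))
          (∫ x in xmf lam..xpf lam, (Real.sqrt (lam - V x))⁻¹) lam := by
  have hV₁ : Differentiable ℝ V := hV.differentiable two_ne_zero
  obtain ⟨δ, hδ, c, hc, hPQ, hL, hR⟩ := exists_deriv_bounds_on_Icc_of_continuous_deriv
    (hV.continuous_deriv one_le_two) hxx hV'm hV'p
  obtain ⟨x₀, hx₀, hmax⟩ :=
    isCompact_Icc.exists_isMaxOn (nonempty_Icc.2 hPQ) hV₁.continuous.continuousOn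
  obtain ⟨xl, xr, hxl, hxr, hxl_left, hxr_left, hturn, hderiv⟩ :=
    exists_turningPoints_hasDerivAt_action hV₁ hc hL hR (by linarith) hPQ (by linarith)
      fun x hx ↦ hmax hx
  have hEm : V x₀ < E := by
    rcases div_pos_iff.1 (hpos x₀ (by linarith [hx₀.1]) (by linarith [hx₀.2])) with h | h <;>
      nlinarith [hx₀.1, hx₀.2]
  have hEA : E < V (xm - δ) := by
    rcases div_pos_iff.1 (hpos (xm - δ) (by linarith) (by linarith)) with h | h <;> nlinarith
  have hEB : E < V (xp + δ) := by
    rcases div_pos_iff.1 (hpos (xp + δ) (by linarith) (by linarith)) with h | h <;> nlinarith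
  refine ⟨V x₀, min (V (xm - δ)) (V (xp + δ)), xl, xr, hEm, lt_min hEA hEB, hxl, hxr,
    hVm ▸ hxl_left ⟨by linarith, by linarith⟩, hVp ▸ hxr_left ⟨by linarith, by linarith⟩,
    hturn, hderiv⟩
end

section
/- Let f : (a,b) → ℝ with x₀ ∈ (a,b) be such that f(x)/(x−x₀) is positive and twice continuously differentiable on (a,b). Define ζ(x) by (2/3)ζ(x)^{3/2} = ∫_{x₀}^x √(f(t)) dt for x ≥ x₀ and (2/3)(−ζ(x))^{3/2} = ∫_x^{x₀} √(−f(t)) dt for x < x₀. Then ζ is strictly increasing on (a,b), ζ(x)/(x−x₀) is positive, and ζ'(x₀) = f'(x₀)^{1/3}. -/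
open MeasureTheory

private lemma base0 (s : ℝ) : ∫ t in (0:ℝ)..s, Real.sqrt t = (2/3) * s ^ ((3:ℝ)/2) := by
  simp_rw [Real.sqrt_eq_rpow]
  rw [integral_rpow (Or.inl (by norm_num))]
  rw [Real.zero_rpow (by norm_num : (1/2 + 1 : ℝ) ≠ 0)]
  norm_num
  ring

private lemma base_right (c x : ℝ) :
    ∫ t in c..x, Real.sqrt (t - c) = (2/3) * (x - c) ^ ((3:ℝ)/2) := by
  rw [intervalIntegral.integral_comp_sub_right (fun t => Real.sqrt t) c, sub_self, base0]

private lemma base_left (c x : ℝ) :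
    ∫ t in x..c, Real.sqrt (c - t) = (2/3) * (c - x) ^ ((3:ℝ)/2) := by
  rw [intervalIntegral.integral_comp_sub_left (fun t => Real.sqrt t) c, sub_self, base0]

private lemma rpow32_le (u v : ℝ) (hv : 0 ≤ v)
    (h : u ^ ((3:ℝ)/2) ≤ v ^ ((3:ℝ)/2)) : u ≤ v := by
  by_contra hlt
  push_neg at hlt
  exact absurd h (not_le.mpr (Real.rpow_lt_rpow hv hlt (by norm_num)))

private lemma rpow32_lt (u v : ℝ) (hu : 0 ≤ u) (hv : 0 ≤ v)
    (h : u ^ ((3:ℝ)/2) < v ^ ((3:ℝ)/2)) : u < v := by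
  by_contra hle
  push_neg at hle
  exact absurd h (not_lt.mpr (Real.rpow_le_rpow hv hle (by norm_num)))

private lemma cube_pow (m s : ℝ) (hm : 0 ≤ m) (hs : 0 ≤ s) :
    (m ^ ((1:ℝ)/3) * s) ^ ((3:ℝ)/2) = Real.sqrt m * s ^ ((3:ℝ)/2) := by
  rw [Real.mul_rpow (Real.rpow_nonneg hm _) hs, ← Real.rpow_mul hm, Real.sqrt_eq_rpow]
  norm_num

private lemma squeeze_right (x₀ x m M : ℝ) (g : ℝ → ℝ) (hx : x₀ < x) (hm : 0 ≤ m) (hM : 0 ≤ M)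
    (hgcont : ContinuousOn g (Set.Icc x₀ x))
    (hbound : ∀ t ∈ Set.Icc x₀ x, m ≤ g t ∧ g t ≤ M) :
    (2/3) * (m ^ ((1:ℝ)/3) * (x - x₀)) ^ ((3:ℝ)/2) ≤
        (∫ t in x₀..x, Real.sqrt ((t - x₀) * g t)) ∧
    (∫ t in x₀..x, Real.sqrt ((t - x₀) * g t)) ≤
        (2/3) * (M ^ ((1:ℝ)/3) * (x - x₀)) ^ ((3:ℝ)/2) := by
  have hs : (0:ℝ) ≤ x - x₀ := by linarith
  have huIcc : Set.uIcc x₀ x = Set.Icc x₀ x := Set.uIcc_of_le hx.le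
  have hcont : ContinuousOn (fun t => Real.sqrt ((t - x₀) * g t)) (Set.Icc x₀ x) :=
    Real.continuous_sqrt.comp_continuousOn ((continuousOn_id.sub continuousOn_const).mul hgcont)
  have hint : IntervalIntegrable (fun t => Real.sqrt ((t - x₀) * g t)) volume x₀ x :=
    (huIcc ▸ hcont).intervalIntegrable
  have hcb : Continuous (fun t : ℝ => Real.sqrt (t - x₀)) :=
    Real.continuous_sqrt.comp (continuous_id.sub continuous_const)
  have hintm : IntervalIntegrable (fun t => Real.sqrt m * Real.sqrt (t - x₀)) volume x₀ x :=
    ((continuous_const.mul hcb)).intervalIntegrable _ _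
  have hintM : IntervalIntegrable (fun t => Real.sqrt M * Real.sqrt (t - x₀)) volume x₀ x :=
    ((continuous_const.mul hcb)).intervalIntegrable _ _
  have hIm : (∫ t in x₀..x, Real.sqrt m * Real.sqrt (t - x₀)) =
      Real.sqrt m * ((2/3) * (x - x₀) ^ ((3:ℝ)/2)) := by
    rw [intervalIntegral.integral_const_mul, base_right]
  have hIM : (∫ t in x₀..x, Real.sqrt M * Real.sqrt (t - x₀)) =
      Real.sqrt M * ((2/3) * (x - x₀) ^ ((3:ℝ)/2)) := by
    rw [intervalIntegral.integral_const_mul, base_right]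
  constructor
  · have hmono := intervalIntegral.integral_mono_on hx.le hintm hint (fun t ht => by
      rw [Real.sqrt_mul (by linarith [ht.1] : (0:ℝ) ≤ t - x₀), mul_comm (Real.sqrt m)]
      exact mul_le_mul_of_nonneg_left (Real.sqrt_le_sqrt (hbound t ht).1) (Real.sqrt_nonneg _))
    rw [hIm] at hmono
    rw [cube_pow m _ hm hs]
    calc (2/3) * (Real.sqrt m * (x - x₀) ^ ((3:ℝ)/2))
        = Real.sqrt m * ((2/3) * (x - x₀) ^ ((3:ℝ)/2)) := by ring
      _ ≤ _ := hmono
  · have hmono := intervalIntegral.integral_mono_on hx.le hint hintM (fun t ht => by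
      rw [Real.sqrt_mul (by linarith [ht.1] : (0:ℝ) ≤ t - x₀), mul_comm (Real.sqrt M)]
      exact mul_le_mul_of_nonneg_left (Real.sqrt_le_sqrt (hbound t ht).2) (Real.sqrt_nonneg _))
    rw [hIM] at hmono
    rw [cube_pow M _ hM hs]
    calc (∫ t in x₀..x, Real.sqrt ((t - x₀) * g t))
        ≤ Real.sqrt M * ((2/3) * (x - x₀) ^ ((3:ℝ)/2)) := hmono
      _ = (2/3) * (Real.sqrt M * (x - x₀) ^ ((3:ℝ)/2)) := by ring

private lemma squeeze_left (x₀ x m M : ℝ) (g : ℝ → ℝ) (hx : x < x₀) (hm : 0 ≤ m) (hM : 0 ≤ M)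
    (hgcont : ContinuousOn g (Set.Icc x x₀))
    (hbound : ∀ t ∈ Set.Icc x x₀, m ≤ g t ∧ g t ≤ M) :
    (2/3) * (m ^ ((1:ℝ)/3) * (x₀ - x)) ^ ((3:ℝ)/2) ≤
        (∫ t in x..x₀, Real.sqrt ((x₀ - t) * g t)) ∧
    (∫ t in x..x₀, Real.sqrt ((x₀ - t) * g t)) ≤
        (2/3) * (M ^ ((1:ℝ)/3) * (x₀ - x)) ^ ((3:ℝ)/2) := by
  have hs : (0:ℝ) ≤ x₀ - x := by linarith
  have huIcc : Set.uIcc x x₀ = Set.Icc x x₀ := Set.uIcc_of_le hx.le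
  have hcont : ContinuousOn (fun t => Real.sqrt ((x₀ - t) * g t)) (Set.Icc x x₀) :=
    Real.continuous_sqrt.comp_continuousOn ((continuousOn_const.sub continuousOn_id).mul hgcont)
  have hint : IntervalIntegrable (fun t => Real.sqrt ((x₀ - t) * g t)) volume x x₀ :=
    (huIcc ▸ hcont).intervalIntegrable
  have hcb : Continuous (fun t : ℝ => Real.sqrt (x₀ - t)) :=
    Real.continuous_sqrt.comp (continuous_const.sub continuous_id)
  have hintm : IntervalIntegrable (fun t => Real.sqrt m * Real.sqrt (x₀ - t)) volume x x₀ :=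
    ((continuous_const.mul hcb)).intervalIntegrable _ _
  have hintM : IntervalIntegrable (fun t => Real.sqrt M * Real.sqrt (x₀ - t)) volume x x₀ :=
    ((continuous_const.mul hcb)).intervalIntegrable _ _
  have hIm : (∫ t in x..x₀, Real.sqrt m * Real.sqrt (x₀ - t)) =
      Real.sqrt m * ((2/3) * (x₀ - x) ^ ((3:ℝ)/2)) := by
    rw [intervalIntegral.integral_const_mul, base_left]
  have hIM : (∫ t in x..x₀, Real.sqrt M * Real.sqrt (x₀ - t)) =
      Real.sqrt M * ((2/3) * (x₀ - x) ^ ((3:ℝ)/2)) := by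
    rw [intervalIntegral.integral_const_mul, base_left]
  constructor
  · have hmono := intervalIntegral.integral_mono_on hx.le hintm hint (fun t ht => by
      rw [Real.sqrt_mul (by linarith [ht.2] : (0:ℝ) ≤ x₀ - t), mul_comm (Real.sqrt m)]
      exact mul_le_mul_of_nonneg_left (Real.sqrt_le_sqrt (hbound t ht).1) (Real.sqrt_nonneg _))
    rw [hIm] at hmono
    rw [cube_pow m _ hm hs]
    calc (2/3) * (Real.sqrt m * (x₀ - x) ^ ((3:ℝ)/2))
        = Real.sqrt m * ((2/3) * (x₀ - x) ^ ((3:ℝ)/2)) := by ring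
      _ ≤ _ := hmono
  · have hmono := intervalIntegral.integral_mono_on hx.le hint hintM (fun t ht => by
      rw [Real.sqrt_mul (by linarith [ht.2] : (0:ℝ) ≤ x₀ - t), mul_comm (Real.sqrt M)]
      exact mul_le_mul_of_nonneg_left (Real.sqrt_le_sqrt (hbound t ht).2) (Real.sqrt_nonneg _))
    rw [hIM] at hmono
    rw [cube_pow M _ hM hs]
    calc (∫ t in x..x₀, Real.sqrt ((x₀ - t) * g t))
        ≤ Real.sqrt M * ((2/3) * (x₀ - x) ^ ((3:ℝ)/2)) := hmono
      _ = (2/3) * (Real.sqrt M * (x₀ - x) ^ ((3:ℝ)/2)) := by ring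

/-- The Langer variable near a simple turning point: if `f(x) = (x−x₀)g(x)` with `g > 0`
of class `C²` on `(a,b)`, and `ζ` satisfies `(2/3)ζ^{3/2} = ∫_{x₀}^x √f` for `x ≥ x₀` and
`(2/3)(−ζ)^{3/2} = ∫_x^{x₀} √(−f)` for `x < x₀`, then `ζ` is strictly increasing,
`ζ(x)/(x−x₀) > 0` for `x ≠ x₀`, and `ζ'(x₀) = f'(x₀)^{1/3}`. -/
theorem stmt12 (a b x₀ : ℝ) (f g ζ : ℝ → ℝ) (hax : a < x₀) (hxb : x₀ < b)
    (hg : ContDiffOn ℝ 2 g (Set.Ioo a b)) (hgpos : ∀ x ∈ Set.Ioo a b, 0 < g x)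
    (hfg : ∀ x ∈ Set.Ioo a b, f x = (x - x₀) * g x)
    (hζp : ∀ x ∈ Set.Ioo a b, x₀ ≤ x →
      0 ≤ ζ x ∧ (2/3) * (ζ x) ^ ((3:ℝ)/2) = ∫ t in x₀..x, Real.sqrt (f t))
    (hζm : ∀ x ∈ Set.Ioo a b, x < x₀ →
      ζ x ≤ 0 ∧ (2/3) * (-ζ x) ^ ((3:ℝ)/2) = ∫ t in x..x₀, Real.sqrt (-f t)) :
    StrictMonoOn ζ (Set.Ioo a b) ∧
    (∀ x ∈ Set.Ioo a b, x ≠ x₀ → 0 < ζ x / (x - x₀)) ∧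
    HasDerivWithinAt ζ ((deriv f x₀) ^ ((1:ℝ)/3)) (Set.Ioo a b) x₀ := by
  have hx₀ : x₀ ∈ Set.Ioo a b := ⟨hax, hxb⟩
  have hgc : ContinuousOn g (Set.Ioo a b) := hg.continuousOn
  have hsub : ∀ ⦃y⦄, y ∈ Set.Ioo a b → ∀ ⦃x⦄, x ∈ Set.Ioo a b → Set.uIcc y x ⊆ Set.Ioo a b :=
    fun y hy x hx => Set.ordConnected_Ioo.uIcc_subset hy hx
  have hfc : ContinuousOn f (Set.Ioo a b) :=
    ((continuousOn_id.sub continuousOn_const).mul hgc).congr (fun x hx => hfg x hx)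
  have hintp : ∀ ⦃y⦄, y ∈ Set.Ioo a b → ∀ ⦃x⦄, x ∈ Set.Ioo a b →
      IntervalIntegrable (fun t => Real.sqrt (f t)) volume y x :=
    fun y hy x hx =>
      (Real.continuous_sqrt.comp_continuousOn (hfc.mono (hsub hy hx))).intervalIntegrable
  have hintm : ∀ ⦃y⦄, y ∈ Set.Ioo a b → ∀ ⦃x⦄, x ∈ Set.Ioo a b →
      IntervalIntegrable (fun t => Real.sqrt (-f t)) volume y x :=
    fun y hy x hx =>
      (Real.continuous_sqrt.comp_continuousOn ((hfc.mono (hsub hy hx)).neg)).intervalIntegrable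
  have hIpos : ∀ ⦃y⦄, y ∈ Set.Ioo a b → ∀ ⦃x⦄, x ∈ Set.Ioo a b → x₀ ≤ y → y < x →
      0 < ∫ t in y..x, Real.sqrt (f t) := by
    intro y hy x hx hy0 hyx
    refine intervalIntegral.intervalIntegral_pos_of_pos_on (hintp hy hx) ?_ hyx
    intro t ht
    have htab : t ∈ Set.Ioo a b := ⟨hy.1.trans ht.1, ht.2.trans hx.2⟩
    refine Real.sqrt_pos.mpr ?_
    rw [hfg t htab]
    exact mul_pos (by linarith [ht.1]) (hgpos t htab)
  have hIneg : ∀ ⦃y⦄, y ∈ Set.Ioo a b → ∀ ⦃x⦄, x ∈ Set.Ioo a b → y < x → x ≤ x₀ →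
      0 < ∫ t in y..x, Real.sqrt (-f t) := by
    intro y hy x hx hyx hx0
    refine intervalIntegral.intervalIntegral_pos_of_pos_on (hintm hy hx) ?_ hyx
    intro t ht
    have htab : t ∈ Set.Ioo a b := ⟨hy.1.trans ht.1, ht.2.trans hx.2⟩
    refine Real.sqrt_pos.mpr ?_
    rw [hfg t htab]
    have : 0 < (x₀ - t) * g t := mul_pos (by linarith [ht.2]) (hgpos t htab)
    linarith [this]
  have hζ0 : ζ x₀ = 0 := by
    obtain ⟨h0, he⟩ := hζp x₀ hx₀ le_rfl
    rw [intervalIntegral.integral_same] at he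
    have h32 : ζ x₀ ^ ((3:ℝ)/2) = 0 := by linarith
    exact (Real.rpow_eq_zero h0 (by norm_num)).mp h32
  have hζpos : ∀ x ∈ Set.Ioo a b, x₀ < x → 0 < ζ x := by
    intro x hx h
    obtain ⟨h0, he⟩ := hζp x hx h.le
    rcases h0.lt_or_eq with h' | h'
    · exact h'
    · exfalso
      have hp := hIpos hx₀ hx le_rfl h
      rw [← h', Real.zero_rpow (by norm_num), mul_zero] at he
      linarith
  have hζneg : ∀ x ∈ Set.Ioo a b, x < x₀ → ζ x < 0 := by
    intro x hx h
    obtain ⟨h0, he⟩ := hζm x hx h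
    rcases h0.lt_or_eq with h' | h'
    · exact h'
    · exfalso
      have hp := hIneg hx hx₀ h le_rfl
      rw [h', neg_zero, Real.zero_rpow (by norm_num), mul_zero] at he
      linarith
  have hmono : StrictMonoOn ζ (Set.Ioo a b) := by
    intro y hy x hx hyx
    rcases le_or_gt x₀ y with h1 | h1
    · obtain ⟨hy0, hye⟩ := hζp y hy h1
      obtain ⟨hx0, hxe⟩ := hζp x hx (h1.trans hyx.le)
      have hsplit := intervalIntegral.integral_add_adjacent_intervals
        (hintp hx₀ hy) (hintp hy hx)
      have hp := hIpos hy hx h1 hyx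
      have : ζ y ^ ((3:ℝ)/2) < ζ x ^ ((3:ℝ)/2) := by linarith
      exact rpow32_lt _ _ hy0 hx0 this
    · rcases le_or_gt x₀ x with h2 | h2
      · obtain ⟨hx0, _⟩ := hζp x hx h2
        have := hζneg y hy h1
        linarith
      · obtain ⟨hy0, hye⟩ := hζm y hy h1
        obtain ⟨hx0, hxe⟩ := hζm x hx h2
        have hsplit := intervalIntegral.integral_add_adjacent_intervals
          (hintm hy hx) (hintm hx hx₀)
        have hp := hIneg hy hx hyx h2.le
        have h32 : (-ζ x) ^ ((3:ℝ)/2) < (-ζ y) ^ ((3:ℝ)/2) := by linarith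
        have := rpow32_lt _ _ (neg_nonneg.mpr hx0) (neg_nonneg.mpr hy0) h32
        linarith
  have hsign : ∀ x ∈ Set.Ioo a b, x ≠ x₀ → 0 < ζ x / (x - x₀) := by
    intro x hx hne
    rcases hne.lt_or_gt with h | h
    · exact div_pos_of_neg_of_neg (hζneg x hx h) (by linarith)
    · exact div_pos (hζpos x hx h) (by linarith)
  have hgd : DifferentiableAt ℝ g x₀ :=
    (hg.contDiffAt (isOpen_Ioo.mem_nhds hx₀)).differentiableAt (by norm_num)
  have hfd : HasDerivAt f (g x₀) x₀ := by
    have h1 : HasDerivAt (fun x => (x - x₀) * g x)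
        (1 * g x₀ + (x₀ - x₀) * deriv g x₀) x₀ :=
      ((hasDerivAt_id x₀).sub_const x₀).mul hgd.hasDerivAt
    have h2 : HasDerivAt (fun x => (x - x₀) * g x) (g x₀) x₀ := by
      convert h1 using 1; ring
    exact h2.congr_of_eventuallyEq
      (Filter.eventuallyEq_of_mem (isOpen_Ioo.mem_nhds hx₀) hfg)
  have hderiv : deriv f x₀ = g x₀ := hfd.deriv
  refine ⟨hmono, hsign, ?_⟩
  rw [hderiv]
  rw [hasDerivWithinAt_iff_tendsto_slope, Metric.tendsto_nhdsWithin_nhds]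
  intro ε hε
  have hgx₀ : 0 < g x₀ := hgpos x₀ hx₀
  have hcont := Real.continuousAt_rpow_const (g x₀) ((1:ℝ)/3) (Or.inl (ne_of_gt hgx₀))
  rw [Metric.continuousAt_iff] at hcont
  obtain ⟨η, hη, hηc⟩ := hcont ε hε
  set η0 := min (η/2) (g x₀ / 2) with hη0def
  have hη0 : 0 < η0 := lt_min (by linarith) (by linarith)
  have hη0le : η0 ≤ η/2 := min_le_left _ _
  have hη0le2 : η0 ≤ g x₀ / 2 := min_le_right _ _
  set m := g x₀ - η0 with hmdef
  set M := g x₀ + η0 with hMdef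
  have hmpos : 0 < m := by simp only [hmdef]; linarith
  have hMpos : 0 < M := by simp only [hMdef]; linarith
  have hmc : |m ^ ((1:ℝ)/3) - g x₀ ^ ((1:ℝ)/3)| < ε := by
    have : dist m (g x₀) < η := by
      rw [Real.dist_eq]
      rw [show m - g x₀ = -η0 by simp [hmdef]]
      rw [abs_neg, abs_of_pos hη0]; linarith
    have := hηc this
    rwa [Real.dist_eq] at this
  have hMc : |M ^ ((1:ℝ)/3) - g x₀ ^ ((1:ℝ)/3)| < ε := by
    have : dist M (g x₀) < η := by
      rw [Real.dist_eq]
      rw [show M - g x₀ = η0 by simp [hMdef]]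
      rw [abs_of_pos hη0]; linarith
    have := hηc this
    rwa [Real.dist_eq] at this
  have hgcx : ContinuousAt g x₀ := hgc.continuousAt (isOpen_Ioo.mem_nhds hx₀)
  rw [Metric.continuousAt_iff] at hgcx
  obtain ⟨δ₁, hδ₁, hδg⟩ := hgcx η0 hη0
  refine ⟨δ₁, hδ₁, ?_⟩
  rintro x ⟨hxab, hxne⟩ hdx
  have hxne' : x ≠ x₀ := by simpa using hxne
  rw [Real.dist_eq] at hdx
  have hbound : ∀ t ∈ Set.uIcc x₀ x, m ≤ g t ∧ g t ≤ M := by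
    intro t ht
    have hdist : dist t x₀ < δ₁ := by
      rw [Real.dist_eq]
      rcases Set.mem_uIcc.mp ht with ⟨h1, h2⟩ | ⟨h1, h2⟩
      · rcases abs_lt.mp hdx with ⟨ha1, ha2⟩
        exact abs_lt.mpr ⟨by linarith, by linarith⟩
      · rcases abs_lt.mp hdx with ⟨ha1, ha2⟩
        exact abs_lt.mpr ⟨by linarith, by linarith⟩
    have := abs_lt.mp (by rw [← Real.dist_eq]; exact hδg hdist)
    constructor
    · simp only [hmdef]; linarith [this.1]
    · simp only [hMdef]; linarith [this.2]
  have hslope : slope ζ x₀ x = ζ x / (x - x₀) := by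
    rw [slope_def_field, hζ0, sub_zero]
  rw [hslope, Real.dist_eq]
  rcases hxne'.lt_or_gt with hlt | hlt
  · -- x < x₀
    obtain ⟨h0, he⟩ := hζm x hxab hlt
    have huIcc : Set.uIcc x₀ x = Set.Icc x x₀ := by
      rw [Set.uIcc_comm, Set.uIcc_of_le hlt.le]
    have hgco : ContinuousOn g (Set.Icc x x₀) := hgc.mono (by rw [← huIcc]; exact hsub hx₀ hxab)
    have hb : ∀ t ∈ Set.Icc x x₀, m ≤ g t ∧ g t ≤ M := by
      intro t ht; exact hbound t (by rw [huIcc]; exact ht)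
    have heq : (∫ t in x..x₀, Real.sqrt (-f t)) = ∫ t in x..x₀, Real.sqrt ((x₀ - t) * g t) := by
      refine intervalIntegral.integral_congr ?_
      intro t ht
      have htab : t ∈ Set.Ioo a b := hsub hxab hx₀ ht
      simp only
      rw [hfg t htab]
      congr 1
      ring
    rw [heq] at he
    obtain ⟨hlow, hhigh⟩ := squeeze_left x₀ x m M g hlt hmpos.le hMpos.le hgco hb
    have h1 : m ^ ((1:ℝ)/3) * (x₀ - x) ≤ -ζ x := by
      refine rpow32_le _ _ (by linarith) ?_
      linarith
    have h2 : -ζ x ≤ M ^ ((1:ℝ)/3) * (x₀ - x) := by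
      refine rpow32_le _ _ (mul_nonneg (Real.rpow_nonneg hMpos.le _) (by linarith)) ?_
      linarith
    have hxx : (0:ℝ) < x₀ - x := by linarith
    have hdiveq : ζ x / (x - x₀) = (-ζ x) / (x₀ - x) := by
      rw [div_eq_div_iff (by linarith) (by linarith)]
      ring
    rw [hdiveq]
    have hl : m ^ ((1:ℝ)/3) ≤ (-ζ x) / (x₀ - x) := (le_div_iff₀ hxx).mpr h1
    have hr : (-ζ x) / (x₀ - x) ≤ M ^ ((1:ℝ)/3) := (div_le_iff₀ hxx).mpr h2
    rcases abs_lt.mp hmc with ⟨hm1, hm2⟩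
    rcases abs_lt.mp hMc with ⟨hM1, hM2⟩
    exact abs_lt.mpr ⟨by linarith, by linarith⟩
  · -- x₀ < x
    obtain ⟨h0, he⟩ := hζp x hxab hlt.le
    have huIcc : Set.uIcc x₀ x = Set.Icc x₀ x := Set.uIcc_of_le hlt.le
    have hgco : ContinuousOn g (Set.Icc x₀ x) := hgc.mono (by rw [← huIcc]; exact hsub hx₀ hxab)
    have hb : ∀ t ∈ Set.Icc x₀ x, m ≤ g t ∧ g t ≤ M := by
      intro t ht; exact hbound t (by rw [huIcc]; exact ht)
    have heq : (∫ t in x₀..x, Real.sqrt (f t)) = ∫ t in x₀..x, Real.sqrt ((t - x₀) * g t) := by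
      refine intervalIntegral.integral_congr ?_
      intro t ht
      have htab : t ∈ Set.Ioo a b := hsub hx₀ hxab ht
      simp only
      rw [hfg t htab]
    rw [heq] at he
    obtain ⟨hlow, hhigh⟩ := squeeze_right x₀ x m M g hlt hmpos.le hMpos.le hgco hb
    have h1 : m ^ ((1:ℝ)/3) * (x - x₀) ≤ ζ x := by
      refine rpow32_le _ _ h0 ?_
      linarith
    have h2 : ζ x ≤ M ^ ((1:ℝ)/3) * (x - x₀) := by
      refine rpow32_le _ _ (mul_nonneg (Real.rpow_nonneg hMpos.le _) (by linarith)) ?_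
      linarith
    have hxx : (0:ℝ) < x - x₀ := by linarith
    have hl : m ^ ((1:ℝ)/3) ≤ ζ x / (x - x₀) := (le_div_iff₀ hxx).mpr h1
    have hr : ζ x / (x - x₀) ≤ M ^ ((1:ℝ)/3) := (div_le_iff₀ hxx).mpr h2
    rcases abs_lt.mp hmc with ⟨hm1, hm2⟩
    rcases abs_lt.mp hMc with ⟨hM1, hM2⟩
    exact abs_lt.mpr ⟨by linarith, by linarith⟩
end

section
/- Suppose ℏ_n > 0 satisfies ℏ_n⁻¹ = (2n+1)π J(E)⁻¹ + O(n⁻¹) and ℏ_n⁻¹ = (2(n+k)+1)π J(Ẽ_n)⁻¹ + O(n⁻¹) for a fixed integer k, where J is C² near E with J'(E) = T > 0 and Ẽ_n → E. Then Ẽ_n = E + (J(E)/T)(k/n) + O(n⁻²) as n → ∞. -/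
open Filter Asymptotics Real Topology

/-!
Subtracting the two quantization conditions and clearing denominators gives
`(2n+1) J(Ẽₙ) - (2n+2k+1) J(E) = O(1/n)`, i.e. `J(Ẽₙ) = J(E) + J(E) k/n + O(1/n²)`. In particular
`J(Ẽₙ) - J(E) = O(1/n)`, and inverting the second-order Taylor expansion of `J` at `E`
(possible since `J'(E) = T ≠ 0`) gives `Ẽₙ - E = (J(Ẽₙ) - J(E))/T + O(1/n²)`.
-/

theorem ContDiffAt.differentiableAt_deriv {f : ℝ → ℝ} {x₀ : ℝ} (hf : ContDiffAt ℝ 2 f x₀) :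
    DifferentiableAt ℝ (deriv f) x₀ :=
  ((hf.fderiv_right (m := 1) (by norm_num)).differentiableAt one_ne_zero).clm_apply
    (differentiableAt_const 1)

theorem ContDiffAt.isBigO_sub_sub_deriv_mul {f : ℝ → ℝ} {x₀ : ℝ} (hf : ContDiffAt ℝ 2 f x₀) :
    (fun x => f x - f x₀ - deriv f x₀ * (x - x₀)) =O[𝓝 x₀] fun x => (x - x₀) ^ 2 := by
  -- The remainder `f - p` has derivative `o(x - x₀)`, since `deriv f` is differentiable at `x₀`.
  set f₂ := deriv (deriv f) x₀
  set p : ℝ → ℝ := fun x => deriv f x₀ * (x - x₀) + f₂ / 2 * (x - x₀) ^ 2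
  obtain ⟨δ, hδ, hball⟩ := Metric.eventually_nhds_iff_ball.1 (hf.eventually (by simp))
  have hs : Metric.ball x₀ δ ∈ 𝓝 x₀ := Metric.ball_mem_nhds x₀ hδ
  have hp : ∀ x, HasDerivAt p (deriv f x₀ + f₂ * (x - x₀)) x := fun x => by
    refine ((((hasDerivAt_id' x).sub_const x₀).const_mul (deriv f x₀)).fun_add
      ((((hasDerivAt_id' x).sub_const x₀).fun_pow 2).const_mul (f₂ / 2))).congr_deriv ?_
    push_cast
    ring
  have hderiv : ∀ x ∈ Metric.ball x₀ δ, HasDerivWithinAt (fun x => f x - p x)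
      (deriv f x - (deriv f x₀ + f₂ * (x - x₀))) (Metric.ball x₀ δ) x := fun x hx =>
    (((hball x hx).differentiableAt (by simp)).hasDerivAt.sub (hp x)).hasDerivWithinAt
  have hsecond : (fun x => deriv f x - (deriv f x₀ + f₂ * (x - x₀))) =o[𝓝[Metric.ball x₀ δ] x₀]
      fun x => (x - x₀) ^ 1 := by
    rw [nhdsWithin_eq_nhds.2 hs]
    simpa [sub_sub, mul_comm] using hf.differentiableAt_deriv.hasDerivAt.isLittleO
  have hrem := Convex.isLittleO_pow_succ_real (convex_ball x₀ δ) (Metric.mem_ball_self hδ)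
    hderiv hsecond
  rw [nhdsWithin_eq_nhds.2 hs] at hrem
  have hquad : (fun x => f₂ / 2 * (x - x₀) ^ 2) =O[𝓝 x₀] fun x => (x - x₀) ^ 2 :=
    (isBigO_refl _ _).const_mul_left _
  refine (hrem.isBigO.add hquad).congr_left fun x => ?_
  simp only [p]
  ring

theorem ContDiffAt.isBigO_sub_sub_div_deriv {α : Type*} {l : Filter α} {f : ℝ → ℝ} {x₀ : ℝ}
    {u g : α → ℝ} (hf : ContDiffAt ℝ 2 f x₀) (hf' : deriv f x₀ ≠ 0) (hu : Tendsto u l (𝓝 x₀))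
    (hfu : (fun i => f (u i) - f x₀) =O[l] g) :
    (fun i => u i - x₀ - (f (u i) - f x₀) / deriv f x₀) =O[l] fun i => g i ^ 2 := by
  have hux : (fun i => u i - x₀) =O[l] g :=
    ((HasDerivAtFilter.isTheta_sub (hf.differentiableAt (by simp)).hasDerivAt
      hf').isBigO_symm.comp_tendsto (hu.prodMk tendsto_const_pure)).trans hfu
  have htaylor := (hf.isBigO_sub_sub_deriv_mul.comp_tendsto hu).trans (hux.pow 2)
  refine (htaylor.const_mul_left (-(deriv f x₀)⁻¹)).congr_left fun i => ?_
  simp only [Function.comp_apply]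
  field_simp
  ring

theorem isBigO_natCast_inv_sq :
    (fun n : ℕ => (n : ℝ)⁻¹ ^ 2) =O[atTop] fun n => (n : ℝ)⁻¹ := by
  have hzero := tendsto_inv_atTop_zero.comp (tendsto_natCast_atTop_atTop (R := ℝ))
  simpa [sq] using (hzero.isBigO_one ℝ).mul (isBigO_refl (fun n : ℕ => (n : ℝ)⁻¹) atTop)

theorem isBigO_two_mul_natCast_add_one_inv :
    (fun n : ℕ => (2 * (n : ℝ) + 1)⁻¹) =O[atTop] fun n => (n : ℝ)⁻¹ := by
  refine IsBigO.of_bound' ?_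
  filter_upwards [eventually_gt_atTop 0] with n hn
  rw [norm_inv, norm_inv, Real.norm_natCast, Real.norm_of_nonneg (by positivity)]
  exact inv_anti₀ (by exact_mod_cast hn) (by linarith)

theorem isBigO_mul_div_natCast (a k : ℝ) :
    (fun n : ℕ => a * (k / n)) =O[atTop] fun n => (n : ℝ)⁻¹ :=
  ((isBigO_refl _ _).const_mul_left (a * k)).congr_left fun n => by ring

theorem isBigO_sub_sub_mul_div_natCast_of_quantization {a c k : ℝ} {b : ℕ → ℝ} (ha : a ≠ 0)
    (hc : c ≠ 0) (hb : Tendsto b atTop (𝓝 a))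
    (h : (fun n : ℕ => (2 * (n + k) + 1) * c * (b n)⁻¹ - (2 * n + 1) * c * a⁻¹) =O[atTop]
      fun n => (n : ℝ)⁻¹) :
    (fun n : ℕ => b n - a - a * (k / n)) =O[atTop] fun n => (n : ℝ)⁻¹ ^ 2 := by
  have hlin : (fun n : ℕ => (2 * n + 1) * b n - (2 * n + 2 * k + 1) * a) =O[atTop]
      fun n => (n : ℝ)⁻¹ := by
    have hbdd := ((hb.const_mul a).div_const c).neg.isBigO_one ℝ
    refine ((hbdd.mul h).congr_right fun n => one_mul _).congr' ?_ EventuallyEq.rfl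
    filter_upwards [hb.eventually_ne ha] with n hbn
    field_simp
    ring
  -- `b - a - a k/n = ((2n+1) b - (2n+2k+1) a - a k/n) / (2n+1)`
  refine ((hlin.sub (isBigO_mul_div_natCast a k)).mul isBigO_two_mul_natCast_add_one_inv).congr'
    ?_ ?_
  · filter_upwards [eventually_gt_atTop 0] with n hn
    field_simp
    ring
  · exact .of_forall fun n => (sq _).symm

theorem stmt16_general (k : ℤ) (E T : ℝ) (J : ℝ → ℝ) (ℏ Et : ℕ → ℝ)
    (hJ : ContDiffAt ℝ 2 J E) (hT : deriv J E = T) (hTpos : 0 < T) (hJpos : 0 < J E)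
    (hEt : Tendsto Et atTop (nhds E))
    (h1 : (fun n : ℕ => (ℏ n)⁻¹ - (2*(n:ℝ)+1) * π * (J E)⁻¹) =O[atTop]
      fun n : ℕ => ((n:ℝ))⁻¹)
    (h2 : (fun n : ℕ => (ℏ n)⁻¹ - (2*((n:ℝ)+(k:ℝ))+1) * π * (J (Et n))⁻¹) =O[atTop]
      fun n : ℕ => ((n:ℝ))⁻¹) :
    (fun n : ℕ => Et n - E - (J E / T) * ((k:ℝ) / (n:ℝ))) =O[atTop]
      fun n : ℕ => ((n:ℝ)^2)⁻¹ := by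
  subst hT
  have hquant := isBigO_sub_sub_mul_div_natCast_of_quantization (k := k)
    (b := fun n => J (Et n)) hJpos.ne' pi_ne_zero
    (hJ.continuousAt.tendsto.comp hEt) ((h1.sub h2).congr_left fun n => by ring)
  have hJEt : (fun n : ℕ => J (Et n) - J E) =O[atTop] fun n => (n : ℝ)⁻¹ :=
    ((hquant.trans isBigO_natCast_inv_sq).add (isBigO_mul_div_natCast (J E) k)).congr_left
      fun n => by ring
  have hinverse := hJ.isBigO_sub_sub_div_deriv hTpos.ne' hEt hJEt
  refine ((hinverse.add (hquant.const_mul_left (deriv J E)⁻¹)).congr_left fun n => ?_).congr_right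
    fun n => inv_pow _ _
  field_simp
  ring

/-- Eigenvalue spacing from the Bohr–Sommerfeld condition: if
`ℏ_n⁻¹ = (2n+1)π J(E)⁻¹ + O(n⁻¹)` and `ℏ_n⁻¹ = (2(n+k)+1)π J(Ẽ_n)⁻¹ + O(n⁻¹)` with `J`
of class `C²` near `E`, `J'(E) = T > 0`, `J(E) > 0` and `Ẽ_n → E`, then
`Ẽ_n = E + (J(E)/T)(k/n) + O(n⁻²)`. -/
theorem stmt16 (k : ℤ) (E T : ℝ) (J : ℝ → ℝ) (ℏ Et : ℕ → ℝ)
    (hℏpos : ∀ n, 0 < ℏ n)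
    (hJ : ContDiffAt ℝ 2 J E) (hT : deriv J E = T) (hTpos : 0 < T) (hJpos : 0 < J E)
    (hEt : Tendsto Et atTop (nhds E))
    (h1 : (fun n : ℕ => (ℏ n)⁻¹ - (2*(n:ℝ)+1) * π * (J E)⁻¹) =O[atTop]
      fun n : ℕ => ((n:ℝ))⁻¹)
    (h2 : (fun n : ℕ => (ℏ n)⁻¹ - (2*((n:ℝ)+(k:ℝ))+1) * π * (J (Et n))⁻¹) =O[atTop]
      fun n : ℕ => ((n:ℝ))⁻¹) :
    (fun n : ℕ => Et n - E - (J E / T) * ((k:ℝ) / (n:ℝ))) =O[atTop]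
      fun n : ℕ => ((n:ℝ)^2)⁻¹ :=
  stmt16_general k E T J ℏ Et hJ hT hTpos hJpos hEt h1 h2
end
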